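/- arXiv:2505.11791 — 3 statements merged into one kernel-verified Lean document; each statement's English description precedes it below -/
import Mathlib

section
/- Corollary 1 (sensitivity of the Nash equilibrium set to multiplicative parameter perturbations): given any γ ∈ ℝ_{≥0}^{E×[m]}, there exists δ > 0 such that for every γ̃ ∈ ℝ_{≥0}^{E×[m]} satisfying (1 − δ)γ_{e,j} ≤ γ̃_{e,j} ≤ (1 + δ)γ_{e,j} for each e ∈ E and j ∈ {1,…,m}, the set of pure Nash equilibria satisfies 𝒜^NE(G(γ), T(γ̃)) ⊆ 𝒜^NE(G(γ), T(γ)). -/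
open Finset

namespace CG

variable {n m : ℕ} {E : Type} [Fintype E] [DecidableEq E]

/-- `load a e` is the number of agents using resource `e` under allocation `a`. -/
def load (a : Fin n → Finset E) (e : E) : ℕ :=
  (Finset.univ.filter fun i => e ∈ a i).card

/-- the cost `ℓ_e(k; γ) = Σ_j γ_{e,j} b_j(k)` of resource `e` at load `k`. -/
def resCost (b : Fin m → ℕ → ℝ) (γ : E → Fin m → ℝ) (e : E) (k : ℕ) : ℝ :=
  ∑ j, γ e j * b j k

/-- the toll `τ_e(k; γ̃) = Σ_j γ̃_{e,j} τ_j⋆(k)` on resource `e` at load `k`. -/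
def resToll (τs : Fin m → ℕ → ℝ) (γt : E → Fin m → ℝ) (e : E) (k : ℕ) : ℝ :=
  ∑ j, γt e j * τs j k

/-- agent `i`'s cost `J_i(a; γ, γ̃)` at allocation `a`. -/
def agentCost (b τs : Fin m → ℕ → ℝ) (γ γt : E → Fin m → ℝ)
    (a : Fin n → Finset E) (i : Fin n) : ℝ :=
  ∑ e ∈ a i, (resCost b γ e (load a e) + resToll τs γt e (load a e))

/-- `a` is a pure Nash equilibrium of the tolled congestion game `(G(γ), T(γ̃))`. -/
def IsNash (A : Fin n → Finset (Finset E)) (b τs : Fin m → ℕ → ℝ)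
    (γ γt : E → Fin m → ℝ) (a : Fin n → Finset E) : Prop :=
  (∀ i, a i ∈ A i) ∧
    ∀ i : Fin n, ∀ ai' ∈ A i,
      agentCost b τs γ γt a i ≤ agentCost b τs γ γt (Function.update a i ai') i

/-- the system cost `L(a; γ) = Σ_e |a|_e ℓ_e(|a|_e; γ)`. -/
def sysCost (b : Fin m → ℕ → ℝ) (γ : E → Fin m → ℝ) (a : Fin n → Finset E) : ℝ :=
  ∑ e, (load a e : ℝ) * resCost b γ e (load a e)

/-- the price of anarchy `PoA(G(γ), T(γ̃))`. -/
noncomputable def PoA (A : Fin n → Finset (Finset E)) (b τs : Fin m → ℕ → ℝ)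
    (γ γt : E → Fin m → ℝ) : ℝ :=
  sSup (sysCost b γ '' {a | IsNash A b τs γ γt a}) /
    sInf (sysCost b γ '' {a : Fin n → Finset E | ∀ i, a i ∈ A i})

/-- `x_e`: number of agents using `e` under both `a` and `a'`. -/
def labelX (a a' : Fin n → Finset E) (e : E) : ℕ :=
  (Finset.univ.filter fun i => e ∈ a i ∧ e ∈ a' i).card

/-- `y_e`: number of agents using `e` under `a` but not `a'`. -/
def labelY (a a' : Fin n → Finset E) (e : E) : ℕ :=
  (Finset.univ.filter fun i => e ∈ a i ∧ e ∉ a' i).card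

/-- `z_e`: number of agents using `e` under `a'` but not `a`. -/
def labelZ (a a' : Fin n → Finset E) (e : E) : ℕ :=
  (Finset.univ.filter fun i => e ∉ a i ∧ e ∈ a' i).card

/-- `θ(x,y,z,j) = Σ_{e : (x_e,y_e,z_e) = (x,y,z)} γ_{e,j}`. -/
def labelSum (γ : E → Fin m → ℝ) (a a' : Fin n → Finset E) (x y z : ℕ) (j : Fin m) : ℝ :=
  ∑ e ∈ Finset.univ.filter
      (fun e => labelX a a' e = x ∧ labelY a a' e = y ∧ labelZ a a' e = z),
    γ e j

/-- sum of `f` over the index set `I = {(x,y,z,j) : 1 ≤ x+y+z ≤ n}`. -/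
def sumI (n : ℕ) (f : ℕ → ℕ → ℕ → Fin m → ℝ) : ℝ :=
  ∑ x ∈ Finset.range (n + 1), ∑ y ∈ Finset.range (n + 1), ∑ z ∈ Finset.range (n + 1),
    ∑ j : Fin m, if 1 ≤ x + y + z ∧ x + y + z ≤ n then f x y z j else 0

/-- feasibility for the robust-PoA linear program at misspecification level `δ`. -/
def Feasible (n : ℕ) (b τs : Fin m → ℕ → ℝ) (δ : ℝ)
    (θ θh : ℕ → ℕ → ℕ → Fin m → ℝ) : Prop :=
  (∀ x y z j, 0 ≤ θ x y z j) ∧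
  (∀ x y z j, 0 ≤ θh x y z j) ∧
  sumI n (fun x y z j => (x + y : ℝ) * b j (x + y) * θ x y z j) = 1 ∧
  sumI n (fun x y z j =>
      ((y : ℝ) * b j (x + y) - (z : ℝ) * b j (x + y + 1)) * θ x y z j
        + ((y : ℝ) * τs j (x + y) - (z : ℝ) * τs j (x + y + 1)) * θh x y z j) ≤ 0 ∧
  (∀ x y z j, (1 - δ) * θ x y z j ≤ θh x y z j ∧ θh x y z j ≤ (1 + δ) * θ x y z j)

/-- `p⋆(δ)`: value of the robust-PoA linear program. -/
noncomputable def pstar (n : ℕ) (m : ℕ) (b τs : Fin m → ℕ → ℝ) (δ : ℝ) : ℝ :=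
  sInf { r : ℝ | ∃ θ θh : ℕ → ℕ → ℕ → Fin m → ℝ, Feasible n b τs δ θ θh ∧
    r = sumI n (fun x y z j => (x + z : ℝ) * b j (x + z) * θ x y z j) }

end CG

/-!
At a fixed allocation, an agent's cost depends on the toll parameters only through a sum of
terms `γ̃_{e,j} τ_j⋆(k)` with `k ≤ n`, so a multiplicative misspecification of size `δ` moves
every cost by at most `δ · max |τ⋆| · Σ γ`. The game is finite, so among the finitely many
profitable unilateral deviations of `G(γ)` with exact tolls there is a smallest gain `ε > 0`.
Once the cost shift is below `ε / 2`, no such deviation can become unprofitable, hence every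
equilibrium under misspecified tolls is already an equilibrium under exact tolls.
-/

open Finset Filter Topology

theorem Finite.exists_pos_forall_nonneg_of_neg_lt {α : Type*} [Finite α] (f : α → ℝ) :
    ∃ ε > 0, ∀ t, -ε < f t → 0 ≤ f t := by
  have hsmall : ∀ t, ∀ᶠ ε in 𝓝 (0 : ℝ), -ε < f t → 0 ≤ f t := fun t => by
    rcases le_or_gt 0 (f t) with hpos | hneg
    · exact Eventually.of_forall fun _ _ => hpos
    · filter_upwards [gt_mem_nhds (neg_pos.2 hneg)] with ε hε hlt
      linarith
  obtain ⟨ε, hgap, hε⟩ :=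
    ((eventually_all.2 hsmall).filter_mono nhdsWithin_le_nhds |>.and
      (self_mem_nhdsWithin : ∀ᶠ ε in 𝓝[>] (0 : ℝ), 0 < ε)).exists
  exact ⟨ε, hε, hgap⟩

namespace CG

variable {n m : ℕ} {E : Type} [DecidableEq E]

theorem load_le (a : Fin n → Finset E) (e : E) : load a e ≤ n :=
  (card_filter_le _ _).trans_eq (card_fin n)

theorem agentCost_sub_agentCost (b τs : Fin m → ℕ → ℝ) (γ γt γt' : E → Fin m → ℝ)
    (c : Fin n → Finset E) (i : Fin n) :
    agentCost b τs γ γt c i - agentCost b τs γ γt' c i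
      = ∑ e ∈ c i, ∑ j, (γt e j - γt' e j) * τs j (load c e) := by
  simp only [agentCost, resToll, ← sum_sub_distrib, add_sub_add_left_eq_sub, sub_mul]

theorem abs_agentCost_sub_le [Fintype E] (b τs : Fin m → ℕ → ℝ) (γ γt γt' : E → Fin m → ℝ)
    {δ B : ℝ} (hB : ∀ j k, k ≤ n → |τs j k| ≤ B) (hclose : ∀ e j, |γt e j - γt' e j| ≤ δ * γ e j)
    (c : Fin n → Finset E) (i : Fin n) :
    |agentCost b τs γ γt c i - agentCost b τs γ γt' c i|
      ≤ δ * (B * ∑ e, ∑ j, γ e j) := by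
  rw [agentCost_sub_agentCost]
  calc |∑ e ∈ c i, ∑ j, (γt e j - γt' e j) * τs j (load c e)|
      ≤ ∑ e ∈ c i, ∑ j, |(γt e j - γt' e j) * τs j (load c e)| :=
        (abs_sum_le_sum_abs _ _).trans (sum_le_sum fun _ _ => abs_sum_le_sum_abs _ _)
    _ ≤ ∑ e, ∑ j, |(γt e j - γt' e j) * τs j (load c e)| :=
        sum_le_sum_of_subset_of_nonneg (subset_univ _)
          fun _ _ _ => sum_nonneg fun _ _ => abs_nonneg _
    _ ≤ ∑ e, ∑ j, δ * γ e j * B := by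
        gcongr with e _ j _
        rw [abs_mul]
        exact mul_le_mul (hclose e j) (hB j _ (load_le c e)) (abs_nonneg _)
          ((abs_nonneg _).trans (hclose e j))
    _ = δ * (B * ∑ e, ∑ j, γ e j) := by
        simp only [mul_sum]
        exact sum_congr rfl fun _ _ => sum_congr rfl fun _ _ => by ring

end CG

theorem nash_set_sensitivity_multiplicative_general
    {n m : ℕ} {E : Type} [Fintype E] [DecidableEq E]
    (A : Fin n → Finset (Finset E))
    (b τs : Fin m → ℕ → ℝ)
    (γ : E → Fin m → ℝ) :
    ∃ δ > (0 : ℝ), ∀ γt : E → Fin m → ℝ,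
      (∀ e j, 0 ≤ γt e j) →
      (∀ e j, (1 - δ) * γ e j ≤ γt e j ∧ γt e j ≤ (1 + δ) * γ e j) →
      ∀ a : Fin n → Finset E, CG.IsNash A b τs γ γt a → CG.IsNash A b τs γ γ a := by
  obtain ⟨ε, hε, hgap⟩ := Finite.exists_pos_forall_nonneg_of_neg_lt
    fun t : (Fin n → Finset E) × Fin n × Finset E =>
      CG.agentCost b τs γ γ (Function.update t.1 t.2.1 t.2.2) t.2.1
        - CG.agentCost b τs γ γ t.1 t.2.1
  obtain ⟨B, hB⟩ := Finite.exists_le fun p : Fin m × Fin (n + 1) => |τs p.1 p.2|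
  have hτ : ∀ j k, k ≤ n → |τs j k| ≤ B := fun j k hk => hB (j, ⟨k, Nat.lt_succ_of_le hk⟩)
  obtain ⟨δ, hδ, hδε⟩ := exists_pos_mul_lt hε (2 * (B * ∑ e, ∑ j, γ e j))
  refine ⟨δ, hδ, fun γt _ hbounds a ⟨ha, hnash⟩ => ⟨ha, fun i ai' hai' => ?_⟩⟩
  have hclose : ∀ e j, |γt e j - γ e j| ≤ δ * γ e j := fun e j =>
    abs_sub_le_iff.2 ⟨by linarith [(hbounds e j).2], by linarith [(hbounds e j).1]⟩
  have hshift := fun c => abs_le.1 (CG.abs_agentCost_sub_le b τs γ γt γ hτ hclose c i)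
  refine sub_nonneg.1 (hgap (a, i, ai') ?_)
  linarith [hnash i ai' hai', hshift a, hshift (Function.update a i ai')]

/-- Corollary 1: sufficiently small multiplicative misspecifications of
the toll parameters introduce no new pure Nash equilibria:
`𝒜^NE(G(γ), T(γ̃)) ⊆ 𝒜^NE(G(γ), T(γ))`. -/
theorem nash_set_sensitivity_multiplicative
    {n m : ℕ} {E : Type} [Fintype E] [DecidableEq E]
    (A : Fin n → Finset (Finset E)) (hA : ∀ i, (A i).Nonempty)
    (b τs : Fin m → ℕ → ℝ)
    (hb_nonneg : ∀ j k, 0 ≤ b j k) (hb_mono : ∀ j, Monotone (b j))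
    (γ : E → Fin m → ℝ) (hγ : ∀ e j, 0 ≤ γ e j) :
    ∃ δ > (0 : ℝ), ∀ γt : E → Fin m → ℝ,
      (∀ e j, 0 ≤ γt e j) →
      (∀ e j, (1 - δ) * γ e j ≤ γt e j ∧ γt e j ≤ (1 + δ) * γ e j) →
      ∀ a : Fin n → Finset E, CG.IsNash A b τs γ γt a → CG.IsNash A b τs γ γ a :=
  nash_set_sensitivity_multiplicative_general A b τs γ
end

section
/- Corollary 2 (price-of-anarchy sensitivity under additive perturbations): given any γ ∈ ℝ_{≥0}^{E×[m]}, assume 𝒜^NE(G(γ), T(γ̃)) is nonempty for the relevant γ̃ and min_{a'∈𝒜} L(a';γ) > 0. Then there exists ε > 0 such that for every γ̃ ∈ ℝ_{≥0}^{E×[m]} satisfying |γ̃_{e,j} − γ_{e,j}| ≤ ε for each e ∈ E and j ∈ {1,…,m}, PoA(G(γ), T(γ̃)) ≤ PoA(G(γ), T(γ)). -/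
open Finset

/-!
Agent costs depend continuously on the toll parameters, so a profitable deviation at an
allocation that is not an equilibrium of `(G(γ), T(γ))` stays profitable under every small
enough change of the tolls. There are finitely many allocations, hence for small perturbations
every equilibrium of `(G(γ), T(γ̃))` is already one of `(G(γ), T(γ))`. The worst equilibrium
cost can therefore only decrease, while the optimal cost does not involve the tolls at all.
-/

open Filter Topology

theorem exists_pos_forall_abs_sub_le_of_eventually_nhds {ι κ : Type*} [Fintype ι] [Fintype κ]
    {P : (ι → κ → ℝ) → Prop} {x₀ : ι → κ → ℝ} (h : ∀ᶠ x in 𝓝 x₀, P x) :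
    ∃ ε > (0 : ℝ), ∀ x : ι → κ → ℝ, (∀ i k, |x i k - x₀ i k| ≤ ε) → P x := by
  obtain ⟨ε, hε, hP⟩ := Metric.eventually_nhds_iff.1 h
  refine ⟨ε / 2, half_pos hε, fun x hx => hP ?_⟩
  refine (dist_pi_lt_iff hε).2 fun i => (dist_pi_lt_iff hε).2 fun k => ?_
  rw [Real.dist_eq]
  linarith [hx i k]

namespace CG

variable {n m : ℕ} {E : Type} [DecidableEq E]

theorem continuous_agentCost_toll (b τs : Fin m → ℕ → ℝ) (γ : E → Fin m → ℝ)
    (a : Fin n → Finset E) (i : Fin n) :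
    Continuous fun γt => agentCost b τs γ γt a i := by
  unfold agentCost resToll
  fun_prop

theorem eventually_not_isNash {A : Fin n → Finset (Finset E)} {b τs : Fin m → ℕ → ℝ}
    {γ γ₀ : E → Fin m → ℝ} {a : Fin n → Finset E} (h : ¬ IsNash A b τs γ γ₀ a) :
    ∀ᶠ γt in 𝓝 γ₀, ¬ IsNash A b τs γ γt a := by
  by_cases hfeas : ∀ i, a i ∈ A i
  · obtain ⟨i, ai', hai', hlt⟩ : ∃ i, ∃ ai' ∈ A i,
        agentCost b τs γ γ₀ (Function.update a i ai') i < agentCost b τs γ γ₀ a i := by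
      simpa [IsNash, hfeas] using h
    have hcont (a' : Fin n → Finset E) : ContinuousAt (agentCost b τs γ · a' i) γ₀ :=
      (continuous_agentCost_toll b τs γ a' i).continuousAt
    filter_upwards [(hcont _).eventually_lt (hcont a) hlt] with γt hγt hNash
    exact (hNash.2 i ai' hai').not_gt hγt
  · exact Eventually.of_forall fun _ hNash => hfeas hNash.1

theorem eventually_setOf_isNash_subset [Fintype E] (A : Fin n → Finset (Finset E))
    (b τs : Fin m → ℕ → ℝ) (γ γ₀ : E → Fin m → ℝ) :
    ∀ᶠ γt in 𝓝 γ₀, {a | IsNash A b τs γ γt a} ⊆ {a | IsNash A b τs γ γ₀ a} := by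
  refine (eventually_all.2 fun a => ?_).mono fun γt h => h
  by_cases ha : IsNash A b τs γ γ₀ a
  · exact Eventually.of_forall fun _ _ => ha
  · exact (eventually_not_isNash ha).mono fun _ hnot hNash => (hnot hNash).elim

theorem PoA_le_PoA_of_subset [Fintype E] {A : Fin n → Finset (Finset E)} {b τs : Fin m → ℕ → ℝ}
    {γ γ₁ γ₂ : E → Fin m → ℝ}
    (hsub : {a | IsNash A b τs γ γ₁ a} ⊆ {a | IsNash A b τs γ γ₂ a})
    (hne : {a | IsNash A b τs γ γ₁ a}.Nonempty)
    (hopt : 0 ≤ sInf (sysCost b γ '' {a : Fin n → Finset E | ∀ i, a i ∈ A i})) :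
    PoA A b τs γ γ₁ ≤ PoA A b τs γ γ₂ :=
  div_le_div_of_nonneg_right
    (csSup_le_csSup ((Set.toFinite _).image _).bddAbove (hne.image _) (Set.image_mono hsub))
    hopt

end CG

theorem poa_sensitivity_additive_general
    {n m : ℕ} {E : Type} [Fintype E] [DecidableEq E]
    (A : Fin n → Finset (Finset E))
    (b τs : Fin m → ℕ → ℝ)
    (γ : E → Fin m → ℝ)
    (hmin : 0 < sInf (CG.sysCost b γ '' {a : Fin n → Finset E | ∀ i, a i ∈ A i})) :
    ∃ ε > (0 : ℝ), ∀ γt : E → Fin m → ℝ,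
      (∀ e j, 0 ≤ γt e j) → (∀ e j, |γt e j - γ e j| ≤ ε) →
      {a : Fin n → Finset E | CG.IsNash A b τs γ γt a}.Nonempty →
      CG.PoA A b τs γ γt ≤ CG.PoA A b τs γ γ := by
  obtain ⟨ε, hε, hsub⟩ := exists_pos_forall_abs_sub_le_of_eventually_nhds
    (CG.eventually_setOf_isNash_subset A b τs γ γ)
  exact ⟨ε, hε, fun γt _ hclose hne => CG.PoA_le_PoA_of_subset (hsub γt hclose) hne hmin.le⟩

/-- Corollary 2: price-of-anarchy sensitivity under additive
perturbations: for all sufficiently small additive misspecifications `γ̃` of `γ`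
(with a nonempty equilibrium set), `PoA(G(γ), T(γ̃)) ≤ PoA(G(γ), T(γ))`. -/
theorem poa_sensitivity_additive
    {n m : ℕ} {E : Type} [Fintype E] [DecidableEq E]
    (A : Fin n → Finset (Finset E)) (hA : ∀ i, (A i).Nonempty)
    (b τs : Fin m → ℕ → ℝ)
    (hb_nonneg : ∀ j k, 0 ≤ b j k) (hb_mono : ∀ j, Monotone (b j))
    (γ : E → Fin m → ℝ) (hγ : ∀ e j, 0 ≤ γ e j)
    (hNE : {a : Fin n → Finset E | CG.IsNash A b τs γ γ a}.Nonempty)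
    (hmin : 0 < sInf (CG.sysCost b γ '' {a : Fin n → Finset E | ∀ i, a i ∈ A i})) :
    ∃ ε > (0 : ℝ), ∀ γt : E → Fin m → ℝ,
      (∀ e j, 0 ≤ γt e j) → (∀ e j, |γt e j - γ e j| ≤ ε) →
      {a : Fin n → Finset E | CG.IsNash A b τs γ γt a}.Nonempty →
      CG.PoA A b τs γ γt ≤ CG.PoA A b τs γ γ :=
  poa_sensitivity_additive_general A b τs γ hmin
end

section
/- Label decomposition of aggregate unilateral-deviation costs: fix two allocations a, a' ∈ 𝒜, assign labels (x_e, y_e, z_e) to each resource e with x_e = #{i : e ∈ a_i ∩ a'_i}, y_e = #{i : e ∈ a_i \ a'_i}, z_e = #{i : e ∈ a'_i \ a_i}, and define θ(x,y,z,j) := Σ_{e : (x_e,y_e,z_e)=(x,y,z)} γ_{e,j} and θ̃(x,y,z,j) := Σ_{e : (x_e,y_e,z_e)=(x,y,z)} γ̃_{e,j} over I = {(x,y,z,j) ∈ ℤ_{≥0}^3 × {1,…,m} : 1 ≤ x+y+z ≤ n}. Then Σ_{i=1}^n J_i((a'_i, a_{−i}); γ, γ̃) = Σ_{(x,y,z,j)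 ∈ I} [(x·b_j(x+y) + z·b_j(x+y+1))·θ(x,y,z,j) + (x·τ_j⋆(x+y) + z·τ_j⋆(x+y+1))·θ̃(x,y,z,j)], with b_j(0) := 0 and τ_j⋆(0) := 0 by convention (note x+y+1 ≤ n whenever z ≥ 1, so all arguments appearing with nonzero coefficients lie in {1,…,n}). -/
open Finset

/-! Both sides are sums over resources. Exchanging agents and resources on the left, an agent
deviating onto `e` sees load `x_e + y_e` if it already used `e` and `x_e + y_e + 1` otherwise, so
`e` contributes `x_e c_e(x_e + y_e) + z_e c_e(x_e + y_e + 1)`, where `c_e = ℓ_e + τ_e`. On the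
right, `θ` groups the resources by their label and the sum over `I` regroups them back: labels
outside `I` contribute nothing, since `x_e + y_e + z_e ≤ n` always and the coefficient vanishes at
`(0, 0, 0)`. -/

theorem Finset.sum_range_sum_filter_eq {ι M : Type*} [AddCommMonoid M] {n : ℕ}
    (s : Finset ι) (g : ι → ℕ) (hg : ∀ i ∈ s, g i ≤ n) (f : ℕ → ι → M) :
    ∑ k ∈ range (n + 1), ∑ i ∈ s with g i = k, f k i = ∑ i ∈ s, f (g i) i := by
  rw [← Finset.sum_fiberwise_of_maps_to (t := range (n + 1))
    (fun i hi => mem_range.2 (Nat.lt_succ_of_le (hg i hi)))]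
  refine sum_congr rfl fun k _ => sum_congr rfl fun i hi => ?_
  rw [(mem_filter.1 hi).2]

namespace CG

variable {n m : ℕ} {E : Type} [DecidableEq E]

theorem sumI_add (f g : ℕ → ℕ → ℕ → Fin m → ℝ) :
    sumI n (fun x y z j => f x y z j + g x y z j) = sumI n f + sumI n g := by
  simp only [sumI, ← sum_add_distrib, ite_add_zero]

section Labels

variable (a a' : Fin n → Finset E) (e : E)

theorem load_eq_labelX_add_labelY : load a e = labelX a a' e + labelY a a' e := by
  rw [load, labelX, labelY, ← filter_filter, ← filter_filter,
    card_filter_add_card_filter_not]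

theorem labelX_add_labelY_add_labelZ_le :
    labelX a a' e + labelY a a' e + labelZ a a' e ≤ n := by
  have hZ : labelZ a a' e ≤ #{i | e ∉ a i} :=
    card_le_card fun i hi => by
      simp only [mem_filter] at hi ⊢
      exact ⟨hi.1, hi.2.1⟩
  have hsplit := card_filter_add_card_filter_not (s := univ) (fun i : Fin n => e ∈ a i)
  rw [card_univ, Fintype.card_fin] at hsplit
  rw [← load_eq_labelX_add_labelY]
  exact (Nat.add_le_add_left hZ _).trans hsplit.le

theorem load_update_of_mem {i : Fin n} {s : Finset E} (h : e ∈ a i) (hs : e ∈ s) :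
    load (Function.update a i s) e = load a e := by
  unfold load
  congr 1
  refine filter_congr fun j _ => ?_
  rcases eq_or_ne j i with rfl | hj
  · simp [h, hs]
  · rw [Function.update_of_ne hj]

theorem load_update_of_notMem {i : Fin n} {s : Finset E} (h : e ∉ a i) (hs : e ∈ s) :
    load (Function.update a i s) e = load a e + 1 := by
  have hinsert :
      univ.filter (fun j => e ∈ Function.update a i s j) =
        insert i (univ.filter (e ∈ a ·)) := by
    ext j
    rcases eq_or_ne j i with rfl | hj
    · simp [hs]
    · simp [hj]
  rw [load, hinsert, card_insert_of_notMem (by simp [h]), load]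

end Labels

variable [Fintype E] (a a' : Fin n → Finset E)

theorem sum_deviation_eq_sum_labels (c : E → ℕ → ℝ) :
    ∑ i, ∑ e ∈ a' i, c e (load (Function.update a i (a' i)) e) =
      ∑ e, ((labelX a a' e : ℝ) * c e (labelX a a' e + labelY a a' e) +
        (labelZ a a' e : ℝ) * c e (labelX a a' e + labelY a a' e + 1)) := by
  rw [sum_comm' (t' := univ) (s' := fun e => univ.filter (e ∈ a' ·)) (by simp)]
  refine sum_congr rfl fun e _ => ?_
  rw [← sum_filter_add_sum_filter_not _ (fun i => e ∈ a i), filter_filter, filter_filter]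
  have hstay : ∀ i ∈ univ.filter (fun i => e ∈ a' i ∧ e ∈ a i),
      c e (load (Function.update a i (a' i)) e) = c e (labelX a a' e + labelY a a' e) := by
    intro i hi
    obtain ⟨hnew, hold⟩ := (mem_filter.1 hi).2
    rw [load_update_of_mem a e hold hnew, load_eq_labelX_add_labelY a a']
  have hjoin : ∀ i ∈ univ.filter (fun i => e ∈ a' i ∧ e ∉ a i),
      c e (load (Function.update a i (a' i)) e) = c e (labelX a a' e + labelY a a' e + 1) := by
    intro i hi
    obtain ⟨hnew, hold⟩ := (mem_filter.1 hi).2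
    rw [load_update_of_notMem a e hold hnew, load_eq_labelX_add_labelY a a']
  rw [sum_congr rfl hstay, sum_congr rfl hjoin, sum_const, sum_const, nsmul_eq_mul, nsmul_eq_mul]
  simp only [labelX, labelZ, and_comm]

theorem labelSum_eq_zero_of_lt (γ : E → Fin m → ℝ) {x y z : ℕ} (h : n < x + y + z)
    (j : Fin m) :
    labelSum γ a a' x y z j = 0 := by
  rw [labelSum, filter_false_of_mem, sum_empty]
  rintro e - ⟨rfl, rfl, rfl⟩
  exact h.not_ge (labelX_add_labelY_add_labelZ_le a a' e)

theorem sumI_mul_labelSum (c : ℕ → ℕ → ℕ → Fin m → ℝ) (hc : ∀ j, c 0 0 0 j = 0)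
    (γ : E → Fin m → ℝ) :
    sumI n (fun x y z j => c x y z j * labelSum γ a a' x y z j) =
      ∑ e, ∑ j, c (labelX a a' e) (labelY a a' e) (labelZ a a' e) j * γ e j := by
  have hdrop_if : ∀ x y z j, (if 1 ≤ x + y + z ∧ x + y + z ≤ n then
      c x y z j * labelSum γ a a' x y z j else 0) = c x y z j * labelSum γ a a' x y z j := by
    intro x y z j
    split_ifs with h
    · rfl
    by_cases hle : x + y + z ≤ n
    · obtain ⟨rfl, rfl, rfl⟩ : x = 0 ∧ y = 0 ∧ z = 0 := by omega
      rw [hc, zero_mul]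
    · rw [labelSum_eq_zero_of_lt a a' γ (not_le.1 hle), mul_zero]
  have hfiber : ∀ x y z, ∑ j, c x y z j * labelSum γ a a' x y z j =
      ∑ e ∈ ((univ.filter (labelX a a' · = x)).filter (labelY a a' · = y)).filter
          (labelZ a a' · = z),
        ∑ j, c x y z j * γ e j := by
    intro x y z
    simp only [labelSum, mul_sum, filter_filter, and_assoc]
    exact sum_comm
  have hbound := labelX_add_labelY_add_labelZ_le a a'
  simp only [sumI, hdrop_if, hfiber]
  simp only [
    sum_range_sum_filter_eq (n := n) _ (labelZ a a') fun e _ => by have := hbound e; omega,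
    sum_range_sum_filter_eq (n := n) _ (labelY a a') fun e _ => by have := hbound e; omega,
    sum_range_sum_filter_eq (n := n) _ (labelX a a') fun e _ => by have := hbound e; omega]

end CG

theorem label_decomposition_deviation_cost_general
    {n m : ℕ} {E : Type} [Fintype E] [DecidableEq E]
    (b τs : Fin m → ℕ → ℝ)
    (γ γt : E → Fin m → ℝ)
    (a a' : Fin n → Finset E) :
    ∑ i : Fin n, CG.agentCost b τs γ γt (Function.update a i (a' i)) i =
      CG.sumI n (fun x y z j =>
        ((x : ℝ) * b j (x + y) + (z : ℝ) * b j (x + y + 1))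
            * CG.labelSum γ a a' x y z j
          + ((x : ℝ) * τs j (x + y) + (z : ℝ) * τs j (x + y + 1))
            * CG.labelSum γt a a' x y z j) := by
  simp only [CG.agentCost, Function.update_self]
  rw [CG.sum_deviation_eq_sum_labels a a' fun e k => CG.resCost b γ e k + CG.resToll τs γt e k,
    CG.sumI_add, CG.sumI_mul_labelSum a a' _ (by simp) γ,
    CG.sumI_mul_labelSum a a' _ (by simp) γt,
    ← sum_add_distrib]
  refine sum_congr rfl fun e _ => ?_
  simp only [CG.resCost, CG.resToll, mul_add, mul_sum, ← sum_add_distrib]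
  exact sum_congr rfl fun j _ => by ring

/-- label decomposition of aggregate unilateral-deviation costs:
`Σ_i J_i((a'_i, a_{−i}); γ, γ̃) = Σ_{(x,y,z,j) ∈ I} [(x·b_j(x+y) + z·b_j(x+y+1))·θ
+ (x·τ_j⋆(x+y) + z·τ_j⋆(x+y+1))·θ̃]`. -/
theorem label_decomposition_deviation_cost
    {n m : ℕ} {E : Type} [Fintype E] [DecidableEq E]
    (A : Fin n → Finset (Finset E)) (hA : ∀ i, (A i).Nonempty)
    (b τs : Fin m → ℕ → ℝ)
    (hb_nonneg : ∀ j k, 0 ≤ b j k) (hb_mono : ∀ j, Monotone (b j))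
    (hb0 : ∀ j, b j 0 = 0) (hτ0 : ∀ j, τs j 0 = 0)
    (γ γt : E → Fin m → ℝ) (hγ : ∀ e j, 0 ≤ γ e j) (hγt : ∀ e j, 0 ≤ γt e j)
    (a a' : Fin n → Finset E) (ha : ∀ i, a i ∈ A i) (ha' : ∀ i, a' i ∈ A i) :
    ∑ i : Fin n, CG.agentCost b τs γ γt (Function.update a i (a' i)) i =
      CG.sumI n (fun x y z j =>
        ((x : ℝ) * b j (x + y) + (z : ℝ) * b j (x + y + 1))
            * CG.labelSum γ a a' x y z j
          + ((x : ℝ) * τs j (x + y) + (z : ℝ) * τs j (x + y + 1))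
            * CG.labelSum γt a a' x y z j) :=
  label_decomposition_deviation_cost_general b τs γ γt a a'
end
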